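/- Every neighborhood pattern of finite size at least 2 whose edges, with directions ignored, form a simple path with at least one edge having the pivot as one endpoint, and which carries exactly one vertex label placed on a vertex other than the non-pivot endpoint of the path, is decomposable; indeed, removing the vertex label yields a connected pivoted graph, and removing the labeled edge incident to the non-pivot endpoint also yields a connected pivoted graph. -/

import Mathlib

/-- A labeled graph over vertex-label alphabet `SV` and edge-label alphabet `SE`:
a vertex set, a set of vertex labels, and a set of labeled edges with no loops. -/
structure LabeledGraph (V SV SE : Type*) where
  verts : Set V
  labels : Set (V × SV)
  edges : Set (V × V × SE)
  labels_sub : ∀ ⦃p : V × SV⦄, p ∈ labels → p.1 ∈ verts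
  edges_sub : ∀ ⦃q : V × V × SE⦄, q ∈ edges → q.1 ∈ verts ∧ q.2.1 ∈ verts
  no_loops : ∀ ⦃q : V × V × SE⦄, q ∈ edges → q.1 ≠ q.2.1

/-- An element of a labeled graph: a vertex label or a labeled edge. -/
abbrev GraphElement (V SV SE : Type*) := (V × SV) ⊕ (V × V × SE)

namespace LabeledGraph

variable {V SV SE : Type*}

/-- Adjacency, ignoring edge directions. -/
def Adj (G : LabeledGraph V SV SE) (x y : V) : Prop :=
  ∃ l, (x, y, l) ∈ G.edges ∨ (y, x, l) ∈ G.edges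

/-- The size of a labeled graph: number of vertex labels plus number of labeled edges. -/
noncomputable def size (G : LabeledGraph V SV SE) : ℕ := G.labels.ncard + G.edges.ncard

/-- Membership of an element in a labeled graph. -/
def HasElement (G : LabeledGraph V SV SE) : GraphElement V SV SE → Prop
  | Sum.inl p => p ∈ G.labels
  | Sum.inr q => q ∈ G.edges

/-- A vertex is occupied (not isolated) w.r.t. given label and edge sets if it
carries some vertex label or is incident to some labeled edge. -/
def Occupied (labels : Set (V × SV)) (edges : Set (V × V × SE)) (x : V) : Prop :=
  (∃ l, (x, l) ∈ labels) ∨ (∃ u l, (x, u, l) ∈ edges ∨ (u, x, l) ∈ edges)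

/-- The vertex labels remaining after deleting an element. -/
def delLabels (G : LabeledGraph V SV SE) : GraphElement V SV SE → Set (V × SV)
  | Sum.inl p => G.labels \ {p}
  | Sum.inr _ => G.labels

/-- The labeled edges remaining after deleting an element. -/
def delEdges (G : LabeledGraph V SV SE) : GraphElement V SV SE → Set (V × V × SE)
  | Sum.inl _ => G.edges
  | Sum.inr q => G.edges \ {q}

lemma delLabels_subset (G : LabeledGraph V SV SE) (e : GraphElement V SV SE) :
    G.delLabels e ⊆ G.labels := by
  cases e with
  | inl p => exact Set.diff_subset
  | inr q => exact subset_rfl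

lemma delEdges_subset (G : LabeledGraph V SV SE) (e : GraphElement V SV SE) :
    G.delEdges e ⊆ G.edges := by
  cases e with
  | inl p => exact subset_rfl
  | inr q => exact Set.diff_subset

/-- Removing an element from a labeled graph: delete that vertex label or labeled
edge, and additionally delete any vertex thereby left isolated. -/
def removeElement (G : LabeledGraph V SV SE) (e : GraphElement V SV SE) :
    LabeledGraph V SV SE where
  verts := {x ∈ G.verts |
    Occupied (G.delLabels e) (G.delEdges e) x ∨ ¬ Occupied G.labels G.edges x}
  labels := G.delLabels e
  edges := G.delEdges e
  labels_sub := fun p hp =>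
    ⟨G.labels_sub (G.delLabels_subset e hp), Or.inl (Or.inl ⟨p.2, hp⟩)⟩
  edges_sub := fun q hq =>
    ⟨⟨(G.edges_sub (G.delEdges_subset e hq)).1,
        Or.inl (Or.inr ⟨q.2.1, q.2.2, Or.inl hq⟩)⟩,
      ⟨(G.edges_sub (G.delEdges_subset e hq)).2,
        Or.inl (Or.inr ⟨q.1, q.2.2, Or.inr hq⟩)⟩⟩
  no_loops := fun q hq => G.no_loops (G.delEdges_subset e hq)

/-- Connectivity of a (non-pivoted) labeled graph: every pair of its vertices is
joined by a path of edges, ignoring edge directions. -/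
def ConnectedGraph (G : LabeledGraph V SV SE) : Prop :=
  ∀ x ∈ G.verts, ∀ y ∈ G.verts, Relation.ReflTransGen G.Adj x y

/-- A leaf vertex: incident to exactly one labeled edge. -/
def IsLeafVertex (G : LabeledGraph V SV SE) (x : V) : Prop :=
  ∃! q : V × V × SE, q ∈ G.edges ∧ (q.1 = x ∨ q.2.1 = x)

/-- A cycle in the underlying undirected multigraph: a closed walk
`ws` using pairwise distinct labeled edges `es`. -/
def IsCycle (G : LabeledGraph V SV SE) (es : List (V × V × SE)) (ws : List V) : Prop :=
  es ≠ [] ∧ es.Nodup ∧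
  ws.length = es.length + 1 ∧ ws.head? = ws.getLast? ∧
  ∀ i q, es[i]? = some q → q ∈ G.edges ∧
    ∃ u w, ws[i]? = some u ∧ ws[i+1]? = some w ∧
      ((q.1 = u ∧ q.2.1 = w) ∨ (q.1 = w ∧ q.2.1 = u))

end LabeledGraph

/-- A pivoted graph: a labeled graph with a distinguished vertex, the pivot. -/
structure PivotedGraph (V SV SE : Type*) extends LabeledGraph V SV SE where
  pivot : V
  pivot_mem : pivot ∈ verts

/-- Pivoted subgraph isomorphism `P₁ ⊆_f P₂`: an injective map on vertices preserving
vertex labels and labeled edges and sending pivot to pivot. -/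
def PSubIso {V₁ V₂ SV SE : Type*}
    (P₁ : PivotedGraph V₁ SV SE) (P₂ : PivotedGraph V₂ SV SE) : Prop :=
  ∃ f : V₁ → V₂,
    Set.MapsTo f P₁.verts P₂.verts ∧
    Set.InjOn f P₁.verts ∧
    (∀ ⦃x : V₁⦄ ⦃l : SV⦄, (x, l) ∈ P₁.labels → (f x, l) ∈ P₂.labels) ∧
    (∀ ⦃x y : V₁⦄ ⦃l : SE⦄, (x, y, l) ∈ P₁.edges → (f x, f y, l) ∈ P₂.edges) ∧
    f P₁.pivot = P₂.pivot

/-- The match set `M_G(P)`: all vertices `v` of `G` such that `P ⊆_f ⟨G, v⟩`. -/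
def matchSet {V V' SV SE : Type*} (G : LabeledGraph V SV SE)
    (P : PivotedGraph V' SV SE) : Set V :=
  {x | ∃ hx : x ∈ G.verts, PSubIso P ⟨G, x, hx⟩}

namespace PivotedGraph

variable {V SV SE : Type*}

/-- A pivoted graph is connected if every vertex is joined to the pivot by a path
of edges, ignoring edge directions. (A neighborhood pattern is a connected
pivoted graph.) -/
def Connected (P : PivotedGraph V SV SE) : Prop :=
  ∀ x ∈ P.verts, Relation.ReflTransGen P.toLabeledGraph.Adj x P.pivot

/-- Removing the element `e` from `P` yields a connected pivoted graph (with the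
same pivot). -/
def ConnectedAfterRemove (P : PivotedGraph V SV SE) (e : GraphElement V SV SE) : Prop :=
  P.pivot ∈ (P.toLabeledGraph.removeElement e).verts ∧
  ∀ x ∈ (P.toLabeledGraph.removeElement e).verts,
    Relation.ReflTransGen (P.toLabeledGraph.removeElement e).Adj x P.pivot

/-- A neighborhood pattern is decomposable if it has two distinct elements such that
removing either one yields a connected pivoted graph. -/
def Decomposable (P : PivotedGraph V SV SE) : Prop :=
  ∃ e₁ e₂ : GraphElement V SV SE, e₁ ≠ e₂ ∧
    P.toLabeledGraph.HasElement e₁ ∧ P.toLabeledGraph.HasElement e₂ ∧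
    P.ConnectedAfterRemove e₁ ∧ P.ConnectedAfterRemove e₂

/-- A path pattern: the edges, with directions ignored, form a simple path (given by
the list of vertices `vs`) having the pivot as one endpoint, with at most one vertex
label, which (if present) is on the other endpoint of the path. -/
def IsPathPattern (P : PivotedGraph V SV SE) : Prop :=
  ∃ vs : List V,
    vs ≠ [] ∧ vs.Nodup ∧ vs.head? = some P.pivot ∧
    P.verts = {x | x ∈ vs} ∧
    (∀ q ∈ P.edges, ∃ i u w, vs[i]? = some u ∧ vs[i + 1]? = some w ∧
      ((q.1 = u ∧ q.2.1 = w) ∨ (q.1 = w ∧ q.2.1 = u))) ∧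
    (∀ i u w, vs[i]? = some u → vs[i + 1]? = some w →
      ∃! q : V × V × SE, q ∈ P.edges ∧
        ((q.1 = u ∧ q.2.1 = w) ∨ (q.1 = w ∧ q.2.1 = u))) ∧
    P.labels.Subsingleton ∧
    (∀ p ∈ P.labels, vs.getLast? = some p.1)

end PivotedGraph

/-- An injective match of a labeled graph pattern `P` in a labeled graph `G`:
an injective map from the vertices of `P` to those of `G` carrying vertex labels
to vertex labels and labeled edges to labeled edges. -/
def MatchOn {V V' SV SE : Type*} (P : LabeledGraph V' SV SE) (G : LabeledGraph V SV SE)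
    (f : P.verts → V) : Prop :=
  (∀ x, f x ∈ G.verts) ∧ Function.Injective f ∧
  (∀ ⦃p : V' × SV⦄ (hp : p ∈ P.labels), (f ⟨p.1, P.labels_sub hp⟩, p.2) ∈ G.labels) ∧
  (∀ ⦃q : V' × V' × SE⦄ (hq : q ∈ P.edges),
    (f ⟨q.1, (P.edges_sub hq).1⟩, f ⟨q.2.1, (P.edges_sub hq).2⟩, q.2.2) ∈ G.edges)

/-!
Removing the vertex label changes no edge, so connectivity is inherited, and the pivot survives
because it is reachable from an endpoint of an edge. Removing the last edge `q` of the path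
isolates its endpoint `lastv`: `q` is the only edge at `lastv` and the label sits elsewhere. So
`lastv` disappears, while every other vertex of the path stays joined to the pivot along
`vs.dropLast`, whose edges avoid `lastv`; the labelled vertex survives, hence so does the pivot.
-/

lemma List.Nodup.eq_of_getElem?_eq_some {α : Type*} {l : List α} (hnd : l.Nodup)
    {i j : ℕ} {x : α} (hi : l[i]? = some x) (hj : l[j]? = some x) : i = j :=
  (List.getElem?_inj (List.getElem?_eq_some_iff.mp hi).1 hnd).mp (hi.trans hj.symm)

section EdgeRelations

variable {V SE : Type*}

def EdgeJoins (q : V × V × SE) (u w : V) : Prop :=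
  (q.1 = u ∧ q.2.1 = w) ∨ (q.1 = w ∧ q.2.1 = u)

def EdgeIncident (q : V × V × SE) (x : V) : Prop :=
  q.1 = x ∨ q.2.1 = x

lemma EdgeJoins.eq_or_eq_of_edgeIncident {q : V × V × SE} {u w x : V}
    (hj : EdgeJoins q u w) (hx : EdgeIncident q x) : u = x ∨ w = x := by
  unfold EdgeJoins at hj
  unfold EdgeIncident at hx
  grind

end EdgeRelations

namespace LabeledGraph

variable {V SV SE : Type*} {G : LabeledGraph V SV SE}

lemma Adj.symm {x y : V} (h : G.Adj x y) : G.Adj y x :=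
  let ⟨l, hl⟩ := h; ⟨l, hl.symm⟩

lemma adj_of_edgeJoins {q : V × V × SE} {u w : V} (hq : q ∈ G.edges) (hj : EdgeJoins q u w) :
    G.Adj u w := by
  obtain ⟨rfl, rfl⟩ | ⟨rfl, rfl⟩ := hj
  exacts [⟨q.2.2, Or.inl hq⟩, ⟨q.2.2, Or.inr hq⟩]

lemma mem_verts_of_reflTransGen {x y : V} (hx : x ∈ G.verts)
    (h : Relation.ReflTransGen G.Adj x y) : y ∈ G.verts := by
  induction h with
  | refl => exact hx
  | tail _ hyz _ =>
    obtain ⟨l, hl | hl⟩ := hyz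
    exacts [(G.edges_sub hl).2, (G.edges_sub hl).1]

lemma occupied_of_edgeIncident {labels : Set (V × SV)} {edges : Set (V × V × SE)}
    {q : V × V × SE} {x : V} (hq : q ∈ edges) (hx : EdgeIncident q x) :
    Occupied labels edges x := by
  obtain rfl | rfl := hx
  exacts [Or.inr ⟨q.2.1, q.2.2, Or.inl hq⟩, Or.inr ⟨q.1, q.2.2, Or.inr hq⟩]

lemma removeElement_verts_subset (e : GraphElement V SV SE) :
    (G.removeElement e).verts ⊆ G.verts :=
  fun _ hx => hx.1

lemma removeElement_inr_adj {q : V × V × SE} {x u w : V} (hqx : EdgeIncident q x)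
    (h : G.Adj u w) (hu : u ≠ x) (hw : w ≠ x) : (G.removeElement (Sum.inr q)).Adj u w := by
  obtain ⟨l, h⟩ := h
  refine ⟨l, h.imp (fun h => ⟨h, fun hq => ?_⟩) (fun h => ⟨h, fun hq => ?_⟩)⟩
  · exact (hq ▸ hqx).elim hu hw
  · exact (hq ▸ hqx).elim hw hu

def EdgesOnPath (G : LabeledGraph V SV SE) (vs : List V) : Prop :=
  ∀ q ∈ G.edges, ∃ i u w, vs[i]? = some u ∧ vs[i + 1]? = some w ∧ EdgeJoins q u w

def UniqueEdgesOnPath (G : LabeledGraph V SV SE) (vs : List V) : Prop :=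
  ∀ i u w, vs[i]? = some u → vs[i + 1]? = some w →
    ∃! q : V × V × SE, q ∈ G.edges ∧ EdgeJoins q u w

variable {vs : List V}

lemma UniqueEdgesOnPath.isChain_adj (h : G.UniqueEdgesOnPath vs) : vs.IsChain G.Adj := by
  refine List.isChain_iff_getElem.mpr fun i hi => ?_
  obtain ⟨q, ⟨hq, hj⟩, -⟩ := h i _ _ (List.getElem?_eq_getElem _) (List.getElem?_eq_getElem hi)
  exact adj_of_edgeJoins hq hj

lemma eq_of_edgeIncident_getLast (hnd : vs.Nodup) (h₁ : G.EdgesOnPath vs)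
    (h₂ : G.UniqueEdgesOnPath vs) {x : V} (hlast : vs.getLast? = some x)
    {q q' : V × V × SE} (hq : q ∈ G.edges) (hq' : q' ∈ G.edges)
    (hqx : EdgeIncident q x) (hq'x : EdgeIncident q' x) : q = q' := by
  have hlast' : vs[vs.length - 1]? = some x := List.getLast?_eq_getElem? ▸ hlast
  have last_step : ∀ e ∈ G.edges, EdgeIncident e x →
      ∃ i u, vs[i]? = some u ∧ vs[i + 1]? = some x ∧ EdgeJoins e u x := by
    intro e he hex
    obtain ⟨i, u, w, hu, hw, hj⟩ := h₁ e he
    obtain rfl | rfl := hj.eq_or_eq_of_edgeIncident hex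
    · have := hnd.eq_of_getElem?_eq_some hu hlast'
      have := (List.getElem?_eq_some_iff.mp hw).1
      omega
    · exact ⟨i, u, hu, hw, hj⟩
  obtain ⟨i, u, hu, hx, hj⟩ := last_step q hq hqx
  obtain ⟨i', u', hu', hx', hj'⟩ := last_step q' hq' hq'x
  obtain rfl : i = i' := by have := hnd.eq_of_getElem?_eq_some hx hx'; omega
  obtain rfl : u = u' := Option.some_injective _ (hu.symm.trans hu')
  exact (h₂ i u x hu hx).unique ⟨hq, hj⟩ ⟨hq', hj'⟩

end LabeledGraph

namespace PivotedGraph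

variable {V SV SE : Type*} {P : PivotedGraph V SV SE}

lemma connectedAfterRemove_of_reflTransGen {e : GraphElement V SV SE} {x : V}
    (hx : x ∈ (P.removeElement e).verts)
    (h : ∀ y ∈ (P.removeElement e).verts,
      Relation.ReflTransGen (P.removeElement e).Adj y P.pivot) :
    P.ConnectedAfterRemove e :=
  ⟨LabeledGraph.mem_verts_of_reflTransGen hx (h x hx), h⟩

lemma Connected.connectedAfterRemove_inl (hconn : P.Connected) {q : V × V × SE}
    (hq : q ∈ P.edges) (p : V × SV) : P.ConnectedAfterRemove (Sum.inl p) :=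
  connectedAfterRemove_of_reflTransGen (x := q.1)
    ((P.removeElement (Sum.inl p)).edges_sub hq).1
    fun y hy => hconn y (LabeledGraph.removeElement_verts_subset _ hy)

lemma connectedAfterRemove_inr_of_edgeIncident_getLast {vs : List V} {lastv : V}
    (hnd : vs.Nodup) (hhead : vs.head? = some P.pivot) (hlast : vs.getLast? = some lastv)
    (hverts : P.verts = {x | x ∈ vs})
    (h₁ : P.EdgesOnPath vs) (h₂ : P.UniqueEdgesOnPath vs)
    {p : V × SV} (hp : p ∈ P.labels) (hlabels : ∀ p ∈ P.labels, p.1 ≠ lastv)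
    {q : V × V × SE} (hq : q ∈ P.edges) (hql : EdgeIncident q lastv) :
    P.ConnectedAfterRemove (Sum.inr q) := by
  set G' := P.removeElement (Sum.inr q)
  have hsplit : vs.dropLast ++ [lastv] = vs := List.dropLast_append_getLast? lastv hlast
  have hlast_notMem : lastv ∉ vs.dropLast := by
    have := hsplit ▸ hnd
    rw [List.nodup_append] at this
    grind
  have hchain : vs.dropLast.IsChain G'.Adj :=
    h₂.isChain_adj.dropLast.imp_of_mem_imp fun u w hu hw huw =>
      LabeledGraph.removeElement_inr_adj hql huw (ne_of_mem_of_not_mem hu hlast_notMem)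
        (ne_of_mem_of_not_mem hw hlast_notMem)
  have hreach : ∀ y ∈ vs.dropLast, Relation.ReflTransGen G'.Adj y P.pivot :=
    hchain.induction _ _ (fun _ _ hyz hy => hy.head hyz.symm) fun hne => by
      rw [List.head_dropLast, (List.head_eq_iff_head?_eq_some _).mpr hhead]
  have hlast_gone : lastv ∉ G'.verts := by
    rintro ⟨-, (⟨l, hl⟩ | ⟨u, l, hul⟩) | hnocc⟩
    · exact hlabels _ hl rfl
    · obtain h | h := hul
      exacts [h.2 (P.eq_of_edgeIncident_getLast hnd h₁ h₂ hlast h.1 hq (Or.inl rfl) hql),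
        h.2 (P.eq_of_edgeIncident_getLast hnd h₁ h₂ hlast h.1 hq (Or.inr rfl) hql)]
    · exact hnocc (LabeledGraph.occupied_of_edgeIncident hq hql)
  refine connectedAfterRemove_of_reflTransGen (G'.labels_sub hp) fun y hy => hreach y ?_
  have hyvs : y ∈ vs := by
    simpa [hverts] using LabeledGraph.removeElement_verts_subset _ hy
  rw [← hsplit, List.mem_append, List.mem_singleton] at hyvs
  exact hyvs.resolve_right (by rintro rfl; exact hlast_gone hy)

end PivotedGraph

theorem decomposable_of_mislabeled_path_general {V SV SE : Type*}
    (P : PivotedGraph V SV SE) (hconn : P.Connected)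
    (vs : List V) (lastv : V) (lab : V × SV)
    (hnd : vs.Nodup) (hlen : 2 ≤ vs.length)
    (hhead : vs.head? = some P.pivot) (hlast : vs.getLast? = some lastv)
    (hverts : P.verts = {x | x ∈ vs})
    (hedges₁ : ∀ q ∈ P.edges, ∃ i u w, vs[i]? = some u ∧ vs[i + 1]? = some w ∧
      ((q.1 = u ∧ q.2.1 = w) ∨ (q.1 = w ∧ q.2.1 = u)))
    (hedges₂ : ∀ i u w, vs[i]? = some u → vs[i + 1]? = some w →
      ∃! q : V × V × SE, q ∈ P.edges ∧
        ((q.1 = u ∧ q.2.1 = w) ∨ (q.1 = w ∧ q.2.1 = u)))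
    (hlab : P.labels = {lab}) (hlabpos : lab.1 ≠ lastv) :
    P.ConnectedAfterRemove (Sum.inl lab) ∧
    (∀ q ∈ P.edges, (q.1 = lastv ∨ q.2.1 = lastv) →
      P.ConnectedAfterRemove (Sum.inr q)) ∧
    P.Decomposable := by
  have hlast' : vs[vs.length - 2 + 1]? = some lastv := by
    rw [show vs.length - 2 + 1 = vs.length - 1 by omega, ← List.getLast?_eq_getElem?, hlast]
  obtain ⟨e, ⟨he, hej⟩, -⟩ :=
    hedges₂ (vs.length - 2) _ _ (List.getElem?_eq_getElem (by omega)) hlast'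
  have hel : EdgeIncident e lastv := hej.elim (fun h => Or.inr h.2) (fun h => Or.inl h.1)
  have hlabmem : lab ∈ P.labels := hlab ▸ rfl
  have hlabel := hconn.connectedAfterRemove_inl he lab
  have hedge : ∀ q ∈ P.edges, EdgeIncident q lastv → P.ConnectedAfterRemove (Sum.inr q) :=
    fun q hq hql => PivotedGraph.connectedAfterRemove_inr_of_edgeIncident_getLast hnd hhead hlast
      hverts hedges₁ hedges₂ hlabmem (by simpa [hlab]) hq hql
  exact ⟨hlabel, hedge, Sum.inl lab, Sum.inr e, Sum.inl_ne_inr, hlabmem, he, hlabel,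
    hedge e he hel⟩

/-- Every neighborhood pattern of finite size at least 2 whose edges, with
directions ignored, form a simple path (vertex list `vs`, with at least one edge) having
the pivot as one endpoint, and which carries exactly one vertex label `lab` placed on a
vertex other than the non-pivot endpoint `lastv` of the path, is decomposable; indeed,
removing the vertex label yields a connected pivoted graph, and removing the labeled
edge incident to the non-pivot endpoint also yields a connected pivoted graph. -/
theorem decomposable_of_mislabeled_path {V SV SE : Type*}
    (P : PivotedGraph V SV SE) (hconn : P.Connected)
    (vs : List V) (lastv : V) (lab : V × SV)
    (hnd : vs.Nodup) (hlen : 2 ≤ vs.length)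
    (hhead : vs.head? = some P.pivot) (hlast : vs.getLast? = some lastv)
    (hverts : P.verts = {x | x ∈ vs})
    (hedges₁ : ∀ q ∈ P.edges, ∃ i u w, vs[i]? = some u ∧ vs[i + 1]? = some w ∧
      ((q.1 = u ∧ q.2.1 = w) ∨ (q.1 = w ∧ q.2.1 = u)))
    (hedges₂ : ∀ i u w, vs[i]? = some u → vs[i + 1]? = some w →
      ∃! q : V × V × SE, q ∈ P.edges ∧
        ((q.1 = u ∧ q.2.1 = w) ∨ (q.1 = w ∧ q.2.1 = u)))
    (hlab : P.labels = {lab}) (hlabpos : lab.1 ≠ lastv)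
    (hL : P.labels.Finite) (hE : P.edges.Finite)
    (hsize : 2 ≤ P.toLabeledGraph.size) :
    P.ConnectedAfterRemove (Sum.inl lab) ∧
    (∀ q ∈ P.edges, (q.1 = lastv ∨ q.2.1 = lastv) →
      P.ConnectedAfterRemove (Sum.inr q)) ∧
    P.Decomposable :=
  decomposable_of_mislabeled_path_general P hconn vs lastv lab hnd hlen hhead hlast hverts hedges₁
    hedges₂ hlab hlabpos
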